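/- Let c_L, ρ, κ, ς̃² > 0, ψ, μ ≥ 0 with ψ+μ = 1, w_d ∈ (−1,1), a_L > 0, and set b_L = ς̃² ρ κ / (2 c_L (ψ+μ)). Then the function f_{L,∞}(w̃) = (a_L/(1−w̃²)²) · exp( −(2/b_L) ∫₀^{w̃} (z−w_d)/(1−z²)² dz ), defined for w̃ ∈ (−1,1), satisfies the stationary equation (2(ψ+μ)/κ)(w_d − w̃) f_{L,∞}(w̃) = (1/2)(ς̃² ρ/c_L) · d/dw̃ [ (1−w̃²)² f_{L,∞}(w̃) ] for all w̃ ∈ (−1,1). -/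

import Mathlib

open Set MeasureTheory intervalIntegral

/-- Explicit steady state profile of the leaders' Fokker-Planck equation. -/
noncomputable def leadersSteadyState (a bcoef wd : ℝ) (w : ℝ) : ℝ :=
  a/(1 - w^2)^2 * Real.exp (-(2/bcoef) * ∫ z in (0:ℝ)..w, (z - wd)/(1 - z^2)^2)

/-!
Multiplying the profile by the diffusion weight `(1 - w²)²` cancels its prefactor, leaving
`a · exp(-(2/b) ∫₀^w (z - w_d)/(1 - z²)² dz)`. By the fundamental theorem of calculus its
derivative is `(2/b)(w_d - w)/(1 - w²)²` times itself, i.e. `(2/b)(w_d - w) f(w)`, and the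
choice of `b` turns `(ς̃²ρ/(2c_L)) · (2/b)` into `2(ψ+μ)/κ`.
-/

theorem ContinuousOn.hasDerivAt_intervalIntegral {E : Type*} [NormedAddCommGroup E]
    [NormedSpace ℝ E] [CompleteSpace E] {f : ℝ → E} {s : Set ℝ} {a w : ℝ} (hf : ContinuousOn f s)
    (hs : IsOpen s) (hs' : s.OrdConnected) (ha : a ∈ s) (hw : w ∈ s) :
    HasDerivAt (fun u => ∫ x in a..u, f x) (f w) w :=
  integral_hasDerivAt_right ((hf.mono (hs'.uIcc_subset ha hw)).intervalIntegrable)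
    (hf.stronglyMeasurableAtFilter hs w hw) (hf.continuousAt (hs.mem_nhds hw))

theorem one_sub_sq_ne_zero_of_mem_Ioo {x : ℝ} (hx : x ∈ Ioo (-1 : ℝ) 1) : 1 - x ^ 2 ≠ 0 := by
  obtain ⟨h₁, h₂⟩ := hx
  nlinarith

theorem continuousOn_drift (wd : ℝ) :
    ContinuousOn (fun z : ℝ => (z - wd) / (1 - z ^ 2) ^ 2) (Ioo (-1) 1) :=
  ContinuousOn.div (by fun_prop) (by fun_prop)
    fun _ hx => pow_ne_zero 2 (one_sub_sq_ne_zero_of_mem_Ioo hx)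

theorem weighted_leadersSteadyState_eqOn (a b wd : ℝ) :
    EqOn (fun x => (1 - x ^ 2) ^ 2 * leadersSteadyState a b wd x)
      (fun x => a * Real.exp (-(2 / b) * ∫ z in (0:ℝ)..x, (z - wd) / (1 - z ^ 2) ^ 2))
      (Ioo (-1) 1) := by
  intro x hx
  have := one_sub_sq_ne_zero_of_mem_Ioo hx
  simp only [leadersSteadyState]
  field_simp

theorem hasDerivAt_weighted_leadersSteadyState (a b wd : ℝ) {w : ℝ} (hw : w ∈ Ioo (-1 : ℝ) 1) :
    HasDerivAt (fun x => (1 - x ^ 2) ^ 2 * leadersSteadyState a b wd x)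
      (2 / b * (wd - w) * leadersSteadyState a b wd w) w := by
  have hI := (continuousOn_drift wd).hasDerivAt_intervalIntegral isOpen_Ioo ordConnected_Ioo
    (a := 0) (by norm_num) hw
  have hexp := ((hI.const_mul (-(2 / b))).exp).const_mul a
  refine (hexp.congr_of_eventuallyEq
    ((weighted_leadersSteadyState_eqOn a b wd).eventuallyEq_of_mem
      (isOpen_Ioo.mem_nhds hw))).congr_deriv ?_
  simp only [leadersSteadyState]
  ring

theorem leaders_steady_state_general
    (cL ρ κ ςt2 : ℝ) (hcL : 0 < cL) (hρ : 0 < ρ) (hκ : 0 < κ) (hςt2 : 0 < ςt2)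
    (ψ μ : ℝ) (hψμ : ψ + μ = 1)
    (wd : ℝ)
    (aL : ℝ)
    (bL : ℝ) (hbL : bL = ςt2*ρ*κ/(2*cL*(ψ + μ))) :
    ∀ w ∈ Ioo (-1:ℝ) 1,
      DifferentiableAt ℝ (fun x => (1 - x^2)^2 * leadersSteadyState aL bL wd x) w
      ∧ (2*(ψ + μ)/κ)*(wd - w)*(leadersSteadyState aL bL wd w)
        = (1/2)*(ςt2*ρ/cL)
          * deriv (fun x => (1 - x^2)^2 * leadersSteadyState aL bL wd x) w := by
  intro w hw
  have hderiv := hasDerivAt_weighted_leadersSteadyState aL bL wd hw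
  refine ⟨hderiv.differentiableAt, ?_⟩
  rw [hderiv.deriv, hbL, hψμ]
  field_simp

/-- the explicit profile `f_{L,∞}` solves the stationary
equation of the leaders' Fokker-Planck equation on `(-1,1)`. -/
theorem leaders_steady_state
    (cL ρ κ ςt2 : ℝ) (hcL : 0 < cL) (hρ : 0 < ρ) (hκ : 0 < κ) (hςt2 : 0 < ςt2)
    (ψ μ : ℝ) (hψ : 0 ≤ ψ) (hμ : 0 ≤ μ) (hψμ : ψ + μ = 1)
    (wd : ℝ) (hwd : wd ∈ Ioo (-1:ℝ) 1)
    (aL : ℝ) (haL : 0 < aL)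
    (bL : ℝ) (hbL : bL = ςt2*ρ*κ/(2*cL*(ψ + μ))) :
    ∀ w ∈ Ioo (-1:ℝ) 1,
      DifferentiableAt ℝ (fun x => (1 - x^2)^2 * leadersSteadyState aL bL wd x) w
      ∧ (2*(ψ + μ)/κ)*(wd - w)*(leadersSteadyState aL bL wd w)
        = (1/2)*(ςt2*ρ/cL)
          * deriv (fun x => (1 - x^2)^2 * leadersSteadyState aL bL wd x) w :=
  leaders_steady_state_general cL ρ κ ςt2 hcL hρ hκ hςt2 ψ μ hψμ wd aL bL hbL
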